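/- arXiv:1704.02852 — 6 statements merged into one kernel-verified Lean document; each statement's English description precedes it below -/
import Mathlib

section
/- Let R be a (possibly noncommutative) unital ring and let a, b ∈ R be elements satisfying the Weyl relation b·a = a·b + 1. Then for every natural number n, (a+b)^n = Σ_{k=0}^{n} C(n,k)·a^k·b^{n−k} + Σ_{k=0}^{n−2} Σ_{j=0}^{n−k−2} C(n,j)·C(n−j,k)·g(n−j−k)·a^k·b^j, where all binomial coefficients and values g(m) act as natural-number scalars on R. -/
/-- `g m = (m-1)!!` if `m` is even, and `0` otherwise. -/
def weylG (m : ℕ) : ℕ := if Even m then Nat.doubleFactorial (m - 1) else 0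

lemma weylG_add_two (m : ℕ) : weylG (m + 2) = (m + 1) * weylG m := by
  by_cases hm : Even m
  · have h2 : Even (m + 2) := by obtain ⟨c, hc⟩ := hm; exact ⟨c + 1, by omega⟩
    match m, hm with
    | 0, _ => simp [weylG, Nat.doubleFactorial]
    | (m'+1), hm =>
      simp only [weylG, if_pos h2, if_pos hm]
      show Nat.doubleFactorial (m' + 2) = (m' + 2) * Nat.doubleFactorial m'
      rw [Nat.doubleFactorial_add_two]
  · have h2 : ¬ Even (m + 2) := by
      intro ⟨c, hc⟩; exact hm ⟨c - 1, by omega⟩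
    simp [weylG, hm, h2]

lemma weylG_succ (m : ℕ) : weylG (m + 1) = m * weylG (m - 1) := by
  match m with
  | 0 => simp [weylG]
  | (m'+1) => rw [weylG_add_two]; rfl

lemma lemB (D k : ℕ) :
    D.choose (k+1) * weylG (D - k) = (k+2) * D.choose (k+2) * weylG (D - k - 2) := by
  rcases lt_or_ge D (k+1) with hD | hD
  · rw [Nat.choose_eq_zero_of_lt hD, Nat.choose_eq_zero_of_lt (by omega : D < k + 2)]
    ring
  rcases eq_or_lt_of_le hD with hD1 | hD2
  · subst hD1
    rw [Nat.choose_eq_zero_of_lt (by omega : k + 1 < k + 2),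
        show k + 1 - k = 1 from by omega]
    simp [weylG]
  · obtain ⟨M, hM⟩ : ∃ M, D - k = M + 2 := ⟨D - k - 2, by omega⟩
    rw [hM, Nat.add_sub_cancel, weylG_add_two]
    have hc : D.choose (k+2) * (k+2) = D.choose (k+1) * (D - (k+1)) :=
      Nat.choose_succ_right_eq D (k+1)
    rw [show D - (k+1) = M + 1 from by omega] at hc
    calc D.choose (k+1) * ((M+1) * weylG M) = D.choose (k+1) * (M+1) * weylG M := by ring
    _ = D.choose (k+2) * (k+2) * weylG M := by rw [hc]
    _ = (k+2) * D.choose (k+2) * weylG M := by ring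

def wc (n k j : ℕ) : ℕ := n.choose j * (n - j).choose k * weylG (n - j - k)

lemma wc_eq_zero {n k j : ℕ} (h : n < k + j) : wc n k j = 0 := by
  unfold wc
  rcases lt_or_ge n j with hj | hj
  · rw [Nat.choose_eq_zero_of_lt hj]; ring
  · rw [Nat.choose_eq_zero_of_lt (show n - j < k from by omega)]; ring

-- R1
lemma wc_rec00 (n : ℕ) : wc (n+1) 0 0 = 1 * wc n 1 0 := by
  unfold wc
  simp only [Nat.choose_zero_right, Nat.choose_one_right, Nat.sub_zero, one_mul, mul_one]
  exact weylG_succ n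

-- R2
lemma wc_rec0j (n j : ℕ) : wc (n+1) 0 (j+1) = wc n 0 j + 1 * wc n 1 (j+1) := by
  unfold wc
  simp only [Nat.choose_zero_right, Nat.choose_one_right, mul_one, one_mul, Nat.sub_zero,
    Nat.choose_succ_succ, Nat.succ_eq_add_one]
  rcases lt_or_ge j n with hj | hj
  · have e1 : n + 1 - (j+1) = n - (j+1) + 1 := by omega
    have e4 : n - j = n - (j+1) + 1 := by omega
    rw [e1, e4, weylG_succ]
    have e2 : n - (j+1) + 1 - 1 = n - (j+1) := rfl
    ring
  · rw [Nat.choose_eq_zero_of_lt (show n < j + 1 from by omega)]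
    have e1 : n + 1 - (j+1) = n - j := by omega
    rw [e1]
    ring

-- R3
lemma wc_reck0 (n k : ℕ) : wc (n+1) (k+1) 0 = wc n k 0 + (k+2) * wc n (k+2) 0 := by
  unfold wc
  simp only [Nat.choose_zero_right, Nat.sub_zero, one_mul, Nat.choose_succ_succ,
    Nat.succ_eq_add_one]
  have e1 : n + 1 - (k+1) = n - k := by omega
  rw [e1, show n - (k+2) = n - k - 2 from by omega]
  have := lemB n k
  zify at this ⊢
  linear_combination this

-- R4
lemma wc_reckj (n k j : ℕ) :
    wc (n+1) (k+1) (j+1) = wc n k (j+1) + wc n (k+1) j + (k+2) * wc n (k+2) (j+1) := by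
  unfold wc
  simp only [Nat.choose_succ_succ, Nat.succ_eq_add_one]
  have e1 : n + 1 - (j + 1) = n - j := by omega
  rw [e1]
  rcases lt_or_ge j n with hj | hj
  · obtain ⟨D, hD⟩ : ∃ D, n - (j+1) = D := ⟨_, rfl⟩
    have e2 : n - j = D + 1 := by omega
    have e3 : n - j - (k+1) = D - k := by omega
    have e4 : n - (j+1) - k = D - k := by omega
    have e5 : n - (j+1) - (k+2) = D - k - 2 := by omega
    rw [e3, e4, e5, hD, e2, Nat.choose_succ_succ D k]
    have hB := lemB D k
    zify at hB ⊢
    linear_combination (n.choose (j+1) : ℤ) * hB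
  · have hj1 : n < j + 1 := by omega
    rw [Nat.choose_eq_zero_of_lt hj1, show n - j = 0 from by omega,
      show n - (j+1) = 0 from by omega]
    rcases Nat.eq_zero_or_pos k with rfl | hk
    · simp [weylG]
    · rw [Nat.choose_eq_zero_of_lt (show 0 < k + 1 from by omega)]
      simp

lemma wc_combined (n k j : ℕ) :
    wc (n+1) k j =
      (if k = 0 then 0 else wc n (k-1) j) + (if j = 0 then 0 else wc n k (j-1))
        + (k+1) * wc n (k+1) j := by
  match k, j with
  | 0, 0 => simpa using wc_rec00 n
  | 0, (j+1) => simpa using wc_rec0j n j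
  | (k+1), 0 =>
    rw [wc_reck0]; simp [add_comm, add_left_comm, mul_comm]
  | (k+1), (j+1) =>
    simp only [if_neg (Nat.succ_ne_zero k), if_neg (Nat.succ_ne_zero j), Nat.add_sub_cancel]
    rw [wc_reckj]

section ring
variable {R : Type*} [Ring R] (a b : R) (h : b * a = a * b + 1)

include h in
lemma b_mul_pow (k : ℕ) : b * a ^ k = a ^ k * b + k • a ^ (k - 1) := by
  induction k with
  | zero => simp
  | succ k ih =>
    rw [pow_succ, ← mul_assoc, ih, add_mul, mul_assoc, h]
    have : (k • a ^ (k-1)) * a = k • a ^ k := by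
      match k with
      | 0 => simp
      | (k+1) => rw [smul_mul_assoc, ← pow_succ]; norm_num
    rw [this, mul_add, mul_one,
      show a ^ k * (a * b) = a ^ (k+1) * b from by rw [← mul_assoc, ← pow_succ],
      Nat.add_sub_cancel, succ_nsmul, ← pow_succ]
    abel

include h in
lemma weyl_key (n : ℕ) :
    (a + b) ^ n = ∑ j ∈ Finset.range (n+1), ∑ k ∈ Finset.range (n+1),
      wc n k j • (a ^ k * b ^ j) := by
  induction n with
  | zero => simp [wc, weylG]
  | succ n ih =>
    have hz : ∀ k j : ℕ, n < k + j → wc n k j = 0 := fun k j hkj => wc_eq_zero hkj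
    have hS : (a+b)^n = ∑ j ∈ Finset.range (n+2), ∑ k ∈ Finset.range (n+2),
        wc n k j • (a ^ k * b ^ j) := by
      rw [ih]
      have inner : ∀ j : ℕ, (∑ k ∈ Finset.range (n+1), wc n k j • (a ^ k * b ^ j))
          = ∑ k ∈ Finset.range (n+2), wc n k j • (a ^ k * b ^ j) := by
        intro j
        rw [Finset.sum_range_succ (n := n+1), hz (n+1) j (by omega), zero_smul, add_zero]
      simp only [inner]
      rw [Finset.sum_range_succ (n := n+1)]
      have hlast : (∑ k ∈ Finset.range (n+2), wc n k (n+1) • (a ^ k * b ^ (n+1))) = 0 :=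
        Finset.sum_eq_zero fun k _ => by rw [hz k (n+1) (by omega), zero_smul]
      rw [hlast, add_zero]
    rw [pow_succ', hS, Finset.mul_sum]
    have expand : ∀ j k : ℕ, (a + b) * (wc n k j • (a ^ k * b ^ j)) =
        wc n k j • (a ^ (k+1) * b ^ j) + wc n k j • (a ^ k * b ^ (j+1))
          + (wc n k j * k) • (a ^ (k-1) * b ^ j) := by
      intro j k
      have ha : a * (a ^ k * b ^ j) = a ^ (k+1) * b ^ j := by
        rw [← mul_assoc, ← pow_succ']
      have hb : b * (a ^ k * b ^ j) = a ^ k * b ^ (j+1) + k • (a ^ (k-1) * b ^ j) := by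
        rw [← mul_assoc, b_mul_pow a b h k, add_mul, smul_mul_assoc, mul_assoc, ← pow_succ']
      rw [add_mul, mul_smul_comm, mul_smul_comm, ha, hb, smul_add, smul_smul, ← add_assoc]
    simp only [expand, Finset.mul_sum]
    simp only [Finset.sum_add_distrib]
    have e1 : (∑ j ∈ Finset.range (n+2), ∑ k ∈ Finset.range (n+2),
        wc n k j • (a ^ (k+1) * b ^ j))
        = ∑ j ∈ Finset.range (n+2), ∑ k ∈ Finset.range (n+2),
          (if k = 0 then 0 else wc n (k-1) j) • (a ^ k * b ^ j) := by
      refine Finset.sum_congr rfl fun j _ => ?_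
      rw [Finset.sum_range_succ (n := n+1), hz (n+1) j (by omega), zero_smul, add_zero,
        Finset.sum_range_succ' (n := n+1)]
      simp only [Nat.succ_ne_zero, if_false, Nat.add_sub_cancel, if_true, zero_smul,
        add_zero]
    have e2 : (∑ j ∈ Finset.range (n+2), ∑ k ∈ Finset.range (n+2),
        wc n k j • (a ^ k * b ^ (j+1)))
        = ∑ j ∈ Finset.range (n+2), ∑ k ∈ Finset.range (n+2),
          (if j = 0 then 0 else wc n k (j-1)) • (a ^ k * b ^ j) := by
      rw [Finset.sum_comm]
      conv_rhs => rw [Finset.sum_comm]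
      refine Finset.sum_congr rfl fun k _ => ?_
      rw [Finset.sum_range_succ (n := n+1), hz k (n+1) (by omega), zero_smul, add_zero,
        Finset.sum_range_succ' (n := n+1)]
      simp only [Nat.succ_ne_zero, if_false, Nat.add_sub_cancel, if_true, zero_smul,
        add_zero]
    have e3 : (∑ j ∈ Finset.range (n+2), ∑ k ∈ Finset.range (n+2),
        (wc n k j * k) • (a ^ (k-1) * b ^ j))
        = ∑ j ∈ Finset.range (n+2), ∑ k ∈ Finset.range (n+2),
          ((k+1) * wc n (k+1) j) • (a ^ k * b ^ j) := by
      refine Finset.sum_congr rfl fun j _ => ?_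
      rw [Finset.sum_range_succ' (n := n+1), Finset.sum_range_succ (n := n+1),
        hz (n+2) j (by omega), mul_zero, zero_smul, add_zero]
      simp only [Nat.add_sub_cancel, mul_zero, zero_smul, add_zero]
      exact Finset.sum_congr rfl fun k _ => by rw [mul_comm]
    rw [e1, e2, e3]
    have etgt : (∑ j ∈ Finset.range (n+1+1), ∑ k ∈ Finset.range (n+1+1),
        wc (n+1) k j • (a ^ k * b ^ j))
        = ∑ j ∈ Finset.range (n+2), ∑ k ∈ Finset.range (n+2),
          ((if k = 0 then 0 else wc n (k-1) j) • (a ^ k * b ^ j)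
            + (if j = 0 then 0 else wc n k (j-1)) • (a ^ k * b ^ j)
            + ((k+1) * wc n (k+1) j) • (a ^ k * b ^ j)) :=
      Finset.sum_congr rfl fun j _ => Finset.sum_congr rfl fun k _ => by
        rw [wc_combined, add_smul, add_smul]
    rw [etgt]
    simp only [Finset.sum_add_distrib]

lemma wc_diag {n k : ℕ} (hk : k ≤ n) : wc n k (n - k) = n.choose k := by
  unfold wc
  rw [show n - (n - k) - k = 0 from by omega, show n - (n - k) = k from by omega,
    Nat.choose_self, Nat.choose_symm hk]
  simp [weylG]

lemma wc_subdiag {n k j : ℕ} (hj : k + j + 1 = n) : wc n k j = 0 := by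
  unfold wc
  rw [show n - j - k = 1 from by omega]
  simp [weylG]

lemma sum_transform (n : ℕ) :
    (∑ j ∈ Finset.range (n+1), ∑ k ∈ Finset.range (n+1), wc n k j • (a ^ k * b ^ j))
    = (∑ k ∈ Finset.range (n + 1), (n.choose k) • (a ^ k * b ^ (n - k))) +
      ∑ k ∈ Finset.range (n - 1), ∑ j ∈ Finset.range (n - k - 1),
        wc n k j • (a ^ k * b ^ j) := by
  rw [Finset.sum_comm]
  have inner : ∀ k ∈ Finset.range (n+1),
      (∑ j ∈ Finset.range (n+1), wc n k j • (a ^ k * b ^ j))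
      = (n.choose k) • (a ^ k * b ^ (n - k)) +
        ∑ j ∈ Finset.range (n - k - 1), wc n k j • (a ^ k * b ^ j) := by
    intro k hk
    rw [Finset.mem_range] at hk
    have hk' : k ≤ n := by omega
    have shrink : (∑ j ∈ Finset.range (n - k + 1), wc n k j • (a ^ k * b ^ j))
        = ∑ j ∈ Finset.range (n+1), wc n k j • (a ^ k * b ^ j) := by
      apply Finset.sum_subset (Finset.range_subset_range.2 (by omega))
      intro j _ hj
      rw [Finset.mem_range] at hj
      rw [wc_eq_zero (by omega), zero_smul]
    rw [← shrink, Finset.sum_range_succ, wc_diag hk']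
    rcases Nat.eq_zero_or_pos (n - k) with h0 | hpos
    · rw [h0]
      simp [add_comm]
    · obtain ⟨M, hM⟩ : ∃ M, n - k = M + 1 := ⟨n - k - 1, by omega⟩
      rw [hM, Finset.sum_range_succ, wc_subdiag (by omega), zero_smul, add_zero,
        Nat.add_sub_cancel, add_comm]
  rw [Finset.sum_congr rfl inner, Finset.sum_add_distrib]
  congr 1
  symm
  apply Finset.sum_subset (Finset.range_subset_range.2 (by omega))
  intro k _ hk
  rw [Finset.mem_range] at hk
  rw [show n - k - 1 = 0 from by omega]
  simp

end ring

/-- In any unital ring with elements `a`, `b` satisfying the Weyl relation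
`b * a = a * b + 1`, the `n`-th power of `a + b` equals the normally ordered
commutative binomial expansion plus a correction term involving double
factorials. -/
theorem weyl_binomial (R : Type*) [Ring R] (a b : R) (h : b * a = a * b + 1) (n : ℕ) :
    (a + b) ^ n =
      (∑ k ∈ Finset.range (n + 1), (n.choose k) • (a ^ k * b ^ (n - k))) +
      ∑ k ∈ Finset.range (n - 1), ∑ j ∈ Finset.range (n - k - 1),
        (n.choose j * (n - j).choose k * weylG (n - j - k)) • (a ^ k * b ^ j) := by
  rw [weyl_key a b h n, sum_transform a b n]
  rfl
end

section
/- Let R be a (possibly noncommutative) unital ring and let s, t ∈ R be elements satisfying the shift relation t·s = s·t − t. Then for every natural number n, (s+t)^n = Σ_{k=0}^{n} C(n,k)·s^k·t^{n−k} + Σ_{k=0}^{n−1} Σ_{j=0}^{n−k−1} (−1)^{n+k+j}·C(n,k)·S(n−k,j)·s^k·t^j, where the integer coefficients act via the canonical ℤ-module structure of R. -/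
/-- Stirling numbers of the second kind, defined by the standard recurrence. -/
def stirling2 : ℕ → ℕ → ℕ
  | 0, 0 => 1
  | 0, _ + 1 => 0
  | _ + 1, 0 => 0
  | n + 1, k + 1 => (k + 1) * stirling2 n (k + 1) + stirling2 n k

lemma stirling2_zero_of_lt : ∀ m j, m < j → stirling2 m j = 0
  | 0, _ + 1, _ => rfl
  | m + 1, j + 1, h => by
    simp [stirling2, stirling2_zero_of_lt m (j+1) (by omega),
      stirling2_zero_of_lt m j (by omega)]

lemma stirling2_self : ∀ m, stirling2 m m = 1
  | 0 => rfl
  | m + 1 => by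
    simp [stirling2, stirling2_self m, stirling2_zero_of_lt m (m+1) (by omega)]

/-- signed coefficient -/
def aco (m j : ℕ) : ℤ := (-1) ^ (m + j) * stirling2 m j

lemma aco_succ_succ (m j : ℕ) :
    aco (m+1) (j+1) = aco m j - ((j:ℤ)+1) * aco m (j+1) := by
  have h2 : (-1:ℤ) ^ (m+1+(j+1)) = (-1) ^ (m+j) := by
    have : m+1+(j+1) = (m+j) + 2 := by omega
    rw [this, pow_add]; ring
  have h3 : (-1:ℤ) ^ (m+(j+1)) = -(-1) ^ (m+j) := by
    have : m+(j+1) = (m+j) + 1 := by omega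
    rw [this, pow_succ]; ring
  simp only [aco, stirling2, h2, h3]
  push_cast; ring

lemma aco_self (m : ℕ) : aco m m = 1 := by
  simp [aco, stirling2_self, ← two_mul, pow_mul]

lemma aco_succ_zero (m : ℕ) : aco (m+1) 0 = 0 := by
  simp [aco, stirling2]

lemma aco_zero_of_lt (m j : ℕ) (h : m < j) : aco m j = 0 := by
  simp [aco, stirling2_zero_of_lt m j h]

def Tp {R : Type*} [Ring R] (t : R) (m : ℕ) : R :=
  ∑ j ∈ Finset.range (m+1), aco m j • t ^ j

section
variable {R : Type*} [Ring R] (s t : R)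

lemma tpow_mul_s (h : t * s = s * t - t) (j : ℕ) :
    t ^ j * s = s * t ^ j - (j : ℤ) • t ^ j := by
  induction j with
  | zero => simp
  | succ j ih =>
    have e : t ^ (j+1) * s = t ^ j * (t * s) := by rw [pow_succ, mul_assoc]
    rw [e, h, mul_sub, ← mul_assoc, ← pow_succ, ih, sub_mul, smul_mul_assoc,
      mul_assoc, ← pow_succ]
    rw [Nat.cast_add, Nat.cast_one, add_smul, one_smul]
    abel

lemma Tp_succ_eq (m : ℕ) :
    Tp t (m+1) = (∑ j ∈ Finset.range (m+1), aco m j • t ^ (j+1)) -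
      ∑ j ∈ Finset.range (m+1), ((j:ℤ) * aco m j) • t ^ j := by
  rw [Tp, Finset.sum_range_succ' _ (m+1), aco_succ_zero]
  simp only [aco_succ_succ, zero_smul, add_zero, sub_smul, mul_smul]
  rw [Finset.sum_sub_distrib]
  congr 1
  rw [Finset.sum_range_succ, aco_zero_of_lt m (m+1) (by omega),
    Finset.sum_range_succ' (fun x => (x:ℤ) • aco m x • t ^ x) m]
  simp only [zero_smul, smul_zero, add_zero, Nat.cast_zero, Nat.cast_add, Nat.cast_one]

lemma Tp_step (h : t * s = s * t - t) (m : ℕ) :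
    Tp t m * (s + t) = s * Tp t m + Tp t (m+1) := by
  have expand : Tp t m * (s + t) =
      ∑ j ∈ Finset.range (m+1),
        (aco m j • (s * t ^ j) - ((j:ℤ) * aco m j) • t ^ j + aco m j • t ^ (j+1)) := by
    rw [Tp, Finset.sum_mul]
    refine Finset.sum_congr rfl fun j _ => ?_
    rw [smul_mul_assoc, mul_add, tpow_mul_s s t h j, ← pow_succ, smul_add, smul_sub,
      smul_smul]
    ring_nf
  rw [expand, Finset.sum_add_distrib, Finset.sum_sub_distrib, Tp_succ_eq, Tp,
    Finset.mul_sum]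
  have : ∑ j ∈ Finset.range (m+1), s * (aco m j • t ^ j)
      = ∑ j ∈ Finset.range (m+1), aco m j • (s * t ^ j) :=
    Finset.sum_congr rfl fun j _ => (mul_smul_comm _ _ _)
  rw [this]
  abel
end

section
variable {R : Type*} [Ring R] (s t : R)

lemma key (h : t * s = s * t - t) (n : ℕ) :
    (s + t) ^ n = ∑ k ∈ Finset.range (n+1), n.choose k • (s ^ k * Tp t (n-k)) := by
  induction n with
  | zero => simp [Tp, aco, stirling2]
  | succ n ih =>
    have hstep : ∀ k, s ^ k * Tp t (n-k) * (s + t)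
        = s ^ (k+1) * Tp t (n-k) + s ^ k * Tp t (n-k+1) := fun k => by
      rw [mul_assoc, Tp_step s t h, mul_add, ← mul_assoc, ← pow_succ]
    rw [pow_succ, ih, Finset.sum_mul]
    have e1 : ∀ k ∈ Finset.range (n+1),
        n.choose k • (s ^ k * Tp t (n-k)) * (s+t)
          = n.choose k • (s ^ (k+1) * Tp t (n-k)) + n.choose k • (s ^ k * Tp t (n-k+1)) := by
      intro k _
      rw [smul_mul_assoc, hstep, smul_add]
    rw [Finset.sum_congr rfl e1, Finset.sum_add_distrib]
    rw [Finset.sum_range_succ' (fun k => (n+1).choose k • (s ^ k * Tp t (n+1-k))) (n+1)]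
    simp only [Nat.choose_succ_succ, Nat.succ_sub_succ, add_smul,
      Nat.choose_zero_right, one_smul, pow_zero, one_mul]
    rw [Finset.sum_add_distrib, add_assoc]
    congr 1
    rw [Finset.sum_range_succ (fun k => n.choose (k+1) • (s^(k+1) * Tp t (n-k))) n,
      Nat.choose_succ_self, zero_smul, add_zero,
      Finset.sum_range_succ' (fun k => n.choose k • (s^k * Tp t (n-k+1))) n]
    simp only [Nat.choose_zero_right, one_smul, pow_zero, one_mul, Nat.sub_zero]
    congr 1
    refine Finset.sum_congr rfl fun k hk => ?_
    have hk' : n - (k+1) + 1 = n - k := by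
      have := Finset.mem_range.mp hk; omega
    rw [hk']
end

/-- In any unital ring with elements `s`, `t` satisfying the shift relation
`t * s = s * t - t`, the `n`-th power of `s + t` equals the normally ordered
commutative binomial expansion plus a correction term involving Stirling
numbers of the second kind. -/
theorem shift_binomial (R : Type*) [Ring R] (s t : R) (h : t * s = s * t - t) (n : ℕ) :
    (s + t) ^ n =
      (∑ k ∈ Finset.range (n + 1), (n.choose k) • (s ^ k * t ^ (n - k))) +
      ∑ k ∈ Finset.range n, ∑ j ∈ Finset.range (n - k),
        ((-1 : ℤ) ^ (n + k + j) * (n.choose k : ℤ) * (stirling2 (n - k) j : ℤ)) •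
          (s ^ k * t ^ j) := by
  rw [key s t h n]
  have Tp_eq : ∀ m : ℕ, Tp t m = t ^ m + ∑ j ∈ Finset.range m, aco m j • t ^ j := fun m => by
    rw [Tp, Finset.sum_range_succ, aco_self, one_smul, add_comm]
  have e1 : ∀ k ∈ Finset.range (n+1),
      n.choose k • (s ^ k * Tp t (n-k))
        = n.choose k • (s ^ k * t ^ (n-k))
          + ∑ j ∈ Finset.range (n-k), ((n.choose k : ℤ) * aco (n-k) j) • (s ^ k * t ^ j) := by
    intro k _
    rw [Tp_eq, mul_add, smul_add, Finset.mul_sum, Finset.smul_sum]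
    congr 1
    refine Finset.sum_congr rfl fun j _ => ?_
    rw [mul_smul_comm, ← Nat.cast_smul_eq_nsmul ℤ, smul_smul]
  rw [Finset.sum_congr rfl e1, Finset.sum_add_distrib]
  congr 1
  rw [Finset.sum_range_succ, Nat.sub_self, Finset.range_zero, Finset.sum_empty, add_zero]
  refine Finset.sum_congr rfl fun k hk => Finset.sum_congr rfl fun j hj => ?_
  have hk' := Finset.mem_range.mp hk
  have hco : (n.choose k : ℤ) * aco (n-k) j
      = (-1:ℤ) ^ (n + k + j) * (n.choose k : ℤ) * (stirling2 (n-k) j : ℤ) := by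
    have hp : n + k + j = (n - k + j) + 2*k := by omega
    have h2k : (-1:ℤ) ^ (2*k) = 1 := by
      rw [pow_mul]; norm_num
    have h2k2 : (-1:ℤ) ^ (n - k + j + 2*k) = (-1) ^ (n-k) * (-1) ^ j := by
      rw [pow_add, pow_add, h2k]; ring
    rw [aco, hp, pow_add, h2k2]
    ring
  rw [hco]
end

section
/- Let K be a field of characteristic zero and n a natural number. For each pair of finitely supported functions (α, β) ∈ (Fin n →₀ ℕ) × (Fin n →₀ ℕ), let E_{α,β} be the K-linear endomorphism of the polynomial ring K[x_1, …, x_n] given by f ↦ x^α · (∂^β f), i.e. the composition of the iterated partial-derivative operator ∂_1^{β_1} ∘ ⋯ ∘ ∂_n^{β_n} followed by multiplication by the monomial x_1^{α_1}⋯x_n^{α_n}. Then the family (E_{α,β}) indexed by all such pairs (α, β) is linearly independent over K. -/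
open MvPolynomial

/-- The iterated partial-derivative operator `∂^β = ∂_1^{β 1} ∘ ⋯ ∘ ∂_n^{β n}`
on the polynomial ring `K[x_1, …, x_n]`. -/
noncomputable def partialPow (K : Type*) [CommRing K] (n : ℕ) (β : Fin n →₀ ℕ) :
    Module.End K (MvPolynomial (Fin n) K) :=
  (List.ofFn fun i : Fin n => ((pderiv i : Derivation K (MvPolynomial (Fin n) K)
      (MvPolynomial (Fin n) K)).toLinearMap) ^ (β i)).prod

/-- The operator `E_{α,β} : f ↦ x^α · (∂^β f)` on `K[x_1, …, x_n]`:
first apply the iterated partial derivative `∂^β`, then multiply by the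
monomial `x^α`. -/
noncomputable def weylOp (K : Type*) [CommRing K] (n : ℕ) (α β : Fin n →₀ ℕ) :
    Module.End K (MvPolynomial (Fin n) K) :=
  (LinearMap.mulLeft K (monomial α (1 : K))) ∘ₗ partialPow K n β

section Aux

variable {K : Type*} [CommRing K] {n : ℕ}

lemma pderiv_pow_monomial (i : Fin n) (k : ℕ) (γ : Fin n →₀ ℕ) (c : K) :
    (((pderiv i : Derivation K (MvPolynomial (Fin n) K) (MvPolynomial (Fin n) K)).toLinearMap) ^ k)
      (monomial γ c)
      = monomial (γ - Finsupp.single i k) (((γ i).descFactorial k : K) * c) := by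
  induction k generalizing γ c with
  | zero => simp
  | succ k ih =>
    rw [pow_succ, Module.End.mul_apply]
    rw [show ((pderiv i : Derivation K (MvPolynomial (Fin n) K) (MvPolynomial (Fin n) K)).toLinearMap) (monomial γ c) = (pderiv i) (monomial γ c) from rfl, pderiv_monomial]
    rw [ih]
    have hidx : γ - Finsupp.single i 1 - Finsupp.single i k = γ - Finsupp.single i (k + 1) := by
      rw [tsub_tsub, ← Finsupp.single_add, add_comm]
    have happ : ((γ - Finsupp.single i 1 : Fin n →₀ ℕ)) i = γ i - 1 := by simp
    rw [hidx, happ]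
    congr 1
    rcases Nat.eq_zero_or_eq_succ_pred (γ i) with h | h
    · rw [h]; simp
    · rw [h, Nat.succ_descFactorial_succ, Nat.succ_sub_one]
      push_cast
      ring

lemma list_prod_pderiv_monomial (β γ : Fin n →₀ ℕ) (c : K) (l : List (Fin n)) (hl : l.Nodup) :
    (l.map fun i => ((pderiv i : Derivation K (MvPolynomial (Fin n) K)
        (MvPolynomial (Fin n) K)).toLinearMap) ^ β i).prod (monomial γ c)
      = monomial (γ - ∑ i ∈ l.toFinset, Finsupp.single i (β i))
          (((∏ i ∈ l.toFinset, (γ i).descFactorial (β i) : ℕ) : K) * c) := by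
  induction l with
  | nil => simp
  | cons a l ih =>
    rw [List.nodup_cons] at hl
    obtain ⟨ha, hl⟩ := hl
    rw [List.map_cons, List.prod_cons, Module.End.mul_apply, ih hl, pderiv_pow_monomial]
    have haS : ((γ - ∑ i ∈ l.toFinset, Finsupp.single i (β i) : Fin n →₀ ℕ)) a = γ a := by
      rw [Finsupp.tsub_apply, Finsupp.finset_sum_apply]
      rw [Finset.sum_eq_zero, Nat.sub_zero]
      intro j hj
      exact Finsupp.single_eq_of_ne (fun h => ha (h ▸ List.mem_toFinset.mp hj))
    have hto : (a :: l).toFinset = insert a l.toFinset := by simp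
    have hna : a ∉ l.toFinset := fun h => ha (List.mem_toFinset.mp h)
    rw [haS, hto, Finset.sum_insert hna, Finset.prod_insert hna, tsub_tsub]
    congr 1
    · rw [add_comm]
    · push_cast; ring

lemma partialPow_monomial (β γ : Fin n →₀ ℕ) (c : K) :
    partialPow K n β (monomial γ c)
      = monomial (γ - β) (((∏ i, (γ i).descFactorial (β i) : ℕ) : K) * c) := by
  have h := list_prod_pderiv_monomial (K := K) β γ c (List.finRange n) (List.nodup_finRange n)
  rw [partialPow, List.ofFn_eq_map, h, List.toFinset_finRange, Finsupp.univ_sum_single]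

lemma weylOp_monomial (α β γ : Fin n →₀ ℕ) :
    weylOp K n α β (monomial γ (1 : K))
      = monomial (α + (γ - β)) (((∏ i, (γ i).descFactorial (β i) : ℕ) : K)) := by
  rw [weylOp, LinearMap.comp_apply, partialPow_monomial, LinearMap.mulLeft_apply,
    monomial_mul, one_mul, mul_one]

end Aux

/-- Over a field of characteristic zero, the operators `f ↦ x^α ∂^β f` on the
polynomial ring `K[x_1, …, x_n]`, indexed by pairs `(α, β)`, are linearly
independent over `K`; i.e. the Weyl algebra `D_n(K)` has a PBW basis realized
faithfully as differential operators. -/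
theorem weyl_operators_linearIndependent (K : Type*) [Field K] [CharZero K] (n : ℕ) :
    LinearIndependent K
      (fun p : (Fin n →₀ ℕ) × (Fin n →₀ ℕ) => weylOp K n p.1 p.2) := by
  classical
  rw [linearIndependent_iff']
  intro s g hsum
  by_contra hcon
  push_neg at hcon
  obtain ⟨p₀, hp₀s, hp₀⟩ := hcon
  -- the set of second components with a nonzero coefficient
  set T : Finset (Fin n →₀ ℕ) := (s.filter (fun p => g p ≠ 0)).image Prod.snd with hT
  have hTne : T.Nonempty := ⟨p₀.2, Finset.mem_image.mpr ⟨p₀, Finset.mem_filter.mpr ⟨hp₀s, hp₀⟩, rfl⟩⟩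
  obtain ⟨β₀, hβ₀T, hβ₀min⟩ := T.exists_min_image (fun β => ∑ i, β i) hTne
  obtain ⟨q, hqmem, hq2⟩ := Finset.mem_image.mp hβ₀T
  rw [Finset.mem_filter] at hqmem
  obtain ⟨hqs, hqg⟩ := hqmem
  -- evaluate the relation on the monomial x^β₀ and take the coefficient at q.1
  have h1 : (∑ p ∈ s, g p • weylOp K n p.1 p.2) (monomial β₀ (1 : K)) = 0 := by
    rw [hsum]; rfl
  rw [LinearMap.sum_apply] at h1
  have h2 : ∀ p ∈ s, (g p • weylOp K n p.1 p.2) (monomial β₀ (1 : K))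
      = monomial (p.1 + (β₀ - p.2)) (g p * ((∏ i, (β₀ i).descFactorial (p.2 i) : ℕ) : K)) := by
    intro p _
    rw [LinearMap.smul_apply, weylOp_monomial, smul_monomial, smul_eq_mul]
  rw [Finset.sum_congr rfl h2] at h1
  have h3 := congrArg (coeff (q.1 + (β₀ - q.2))) h1
  rw [coeff_zero, coeff_sum] at h3
  simp only [coeff_monomial] at h3
  -- all terms except the one for `q` vanish
  rw [Finset.sum_eq_single q (fun p hps hpq => ?_) (fun h => absurd hqs h)] at h3
  · rw [if_pos rfl] at h3
    rw [hq2] at h3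
    have hfac : ((∏ i, (β₀ i).descFactorial (β₀ i) : ℕ) : K) ≠ 0 := by
      rw [Nat.cast_ne_zero]
      exact Finset.prod_ne_zero_iff.mpr fun i _ => by
        rw [Nat.descFactorial_self]; exact (β₀ i).factorial_ne_zero
    exact hqg (by
      rcases mul_eq_zero.mp h3 with h | h
      · exact h
      · exact absurd h hfac)
  · -- term for `p ≠ q` vanishes
    split_ifs with hidx
    · rcases eq_or_ne (g p) 0 with hg | hg
      · rw [hg, zero_mul]
      · -- show the descFactorial product is zero, unless p = q
        rcases eq_or_ne ((∏ i, (β₀ i).descFactorial (p.2 i) : ℕ)) 0 with hD | hD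
        · rw [hD, Nat.cast_zero, mul_zero]
        · exfalso
          have hle : ∀ i, p.2 i ≤ β₀ i := by
            intro i
            by_contra hlt
            push_neg at hlt
            exact hD (Finset.prod_eq_zero (Finset.mem_univ i)
              (Nat.descFactorial_eq_zero_iff_lt.mpr hlt))
          have hpT : p.2 ∈ T := Finset.mem_image.mpr
            ⟨p, Finset.mem_filter.mpr ⟨hps, hg⟩, rfl⟩
          have hsumle : ∑ i, β₀ i ≤ ∑ i, p.2 i := hβ₀min _ hpT
          have heq : p.2 = β₀ := by
            ext i
            by_contra hne
            have hlt : p.2 i < β₀ i := lt_of_le_of_ne (hle i) hne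
            have : ∑ i, p.2 i < ∑ i, β₀ i :=
              Finset.sum_lt_sum (fun j _ => hle j) ⟨i, Finset.mem_univ i, hlt⟩
            omega
          apply hpq
          have h1eq : p.1 = q.1 := by
            rw [heq, hq2] at hidx
            exact add_right_cancel hidx
          exact Prod.ext h1eq (heq.trans hq2.symm)
    · rfl
end

section
/- Let A be an associative unital ℚ-algebra (not necessarily commutative), and let B ⊆ A be a subring containing 1 such that every element of A is a rational multiple of an element of B (equivalently, the ℚ-span of B is all of A). Assume B is left Noetherian. Let f_1, …, f_r ∈ B, let I ⊆ A be the left ideal of A generated by f_1, …, f_r, and let J ⊆ B be the left ideal of B generated by f_1, …, f_r. Then there exists a nonzero integer d such that I ∩ B = { g ∈ B : d·g ∈ J }. -/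
/-- Let `A` be a unital (possibly noncommutative) `ℚ`-algebra and `B ⊆ A` a
subring whose `ℚ`-span is all of `A`, and which is left Noetherian. Given
`f_1, …, f_r ∈ B`, let `I` be the left ideal of `A` they generate and `J` the
left ideal of `B` they generate. Then there is a nonzero integer `d` such that
`I ∩ B = { g ∈ B : d • g ∈ J }`. -/
theorem leftIdeal_inter_subring_eq_saturation
    (A : Type*) [Ring A] [Algebra ℚ A] (B : Subring A)
    (hspan : Submodule.span ℚ (B : Set A) = ⊤)
    (hNoeth : IsNoetherianRing B)
    (r : ℕ) (f : Fin r → B) :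
    ∃ d : ℤ, d ≠ 0 ∧
      ∀ g : B,
        ((g : A) ∈ Submodule.span A (Set.range fun i => (f i : A)) ↔
          d • g ∈ Submodule.span B (Set.range f)) := by
  classical
  set J : Submodule B B := Submodule.span B (Set.range f) with hJdef
  set I : Submodule A A := Submodule.span A (Set.range fun i => (f i : A)) with hIdef
  -- J is closed under ℤ-smul
  have hzsmul : ∀ (z : ℤ) (x : B), x ∈ J → z • x ∈ J := by
    intro z x hx
    rw [zsmul_eq_mul]
    exact J.smul_mem _ hx
  -- the chain of saturations
  let K : ℕ → Submodule B B := fun n =>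
    { carrier := {g : B | (n.factorial : ℤ) • g ∈ J}
      add_mem' := fun ha hb => by
        simp only [Set.mem_setOf_eq, smul_add] at *
        exact J.add_mem ha hb
      zero_mem' := by simp [J.zero_mem]
      smul_mem' := fun c g hg => by
        simp only [Set.mem_setOf_eq] at *
        rw [smul_comm]
        exact J.smul_mem c hg }
  have hK : ∀ (n : ℕ) (g : B), g ∈ K n ↔ (n.factorial : ℤ) • g ∈ J := fun n g => Iff.rfl
  have hmono : Monotone K := by
    intro n m hnm g hg
    obtain ⟨k, hk⟩ := Nat.factorial_dvd_factorial hnm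
    rw [hK] at hg ⊢
    have h2 : (m.factorial : ℤ) • g = (k : ℤ) • ((n.factorial : ℤ) • g) := by
      rw [← mul_smul]
      congr 1
      push_cast [hk]
      ring
    rw [h2]
    exact hzsmul _ _ hg
  have hNoe : IsNoetherian B B := hNoeth
  obtain ⟨N, hN⟩ := monotone_stabilizes_iff_noetherian.mpr hNoe ⟨K, hmono⟩
  refine ⟨(N.factorial : ℤ), by exact_mod_cast N.factorial_ne_zero, fun g => ?_⟩
  -- denominator lemma
  have hden : ∀ a : A, ∃ n : ℕ, 0 < n ∧ (n : ℤ) • a ∈ B := by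
    intro a
    have ha : a ∈ Submodule.span ℚ (B : Set A) := by rw [hspan]; trivial
    induction ha using Submodule.span_induction with
    | mem x hx => exact ⟨1, one_pos, by simpa using hx⟩
    | zero => exact ⟨1, one_pos, by simpa using B.zero_mem⟩
    | add x y _ _ hx hy =>
        obtain ⟨n, hn, hxn⟩ := hx; obtain ⟨m, hm, hym⟩ := hy
        refine ⟨n * m, Nat.mul_pos hn hm, ?_⟩
        have h1 : ((n * m : ℕ) : ℤ) • (x + y)
            = (m : ℤ) • ((n : ℤ) • x) + (n : ℤ) • ((m : ℤ) • y) := by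
          rw [smul_add, ← mul_smul, ← mul_smul]
          push_cast
          ring
        rw [h1]
        exact B.toAddSubgroup.add_mem (zsmul_mem hxn _) (zsmul_mem hym _)
    | smul q x _ hx =>
        obtain ⟨n, hn, hxn⟩ := hx
        refine ⟨q.den * n, Nat.mul_pos q.pos hn, ?_⟩
        have h1 : ((q.den * n : ℕ) : ℤ) • (q • x) = q.num • ((n : ℤ) • x) := by
          rw [← Int.cast_smul_eq_zsmul ℚ, ← Int.cast_smul_eq_zsmul ℚ q.num,
            ← Int.cast_smul_eq_zsmul ℚ (n : ℤ) x, smul_smul, smul_smul]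
          congr 1
          push_cast
          rw [mul_assoc, mul_comm (n:ℚ) q, ← mul_assoc]
          have hden0 : ((q.den : ℚ)) ≠ 0 := by exact_mod_cast q.den_ne_zero
          have hq : q * (q.den : ℚ) = q.num := ((div_eq_iff hden0).mp (Rat.num_div_den q)).symm
          rw [mul_comm ((q.den : ℚ)) q, hq]
        rw [h1]
        exact zsmul_mem hxn _
  constructor
  · -- forward direction
    intro hg
    rw [hIdef, Submodule.mem_span_range_iff_exists_fun] at hg
    obtain ⟨c, hc⟩ := hg
    choose n hn hb using fun i => hden (c i)
    set m : ℕ := ∏ i, n i with hm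
    have hmpos : 0 < m := Finset.prod_pos (fun i _ => hn i)
    have hmc : ∀ i, (m : ℤ) • c i ∈ B := by
      intro i
      obtain ⟨k, hk⟩ := Finset.dvd_prod_of_mem n (Finset.mem_univ i)
      have : (m : ℤ) • c i = (k : ℤ) • ((n i : ℤ) • c i) := by
        rw [← mul_smul]; congr 1; rw [hm, hk]; push_cast; ring
      rw [this]
      exact zsmul_mem (hb i) _
    set b : Fin r → B := fun i => ⟨(m : ℤ) • c i, hmc i⟩ with hbdef
    have hsum : (m : ℤ) • g = ∑ i, b i * f i := by
      apply Subtype.ext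
      push_cast
      rw [← hc, Finset.smul_sum]
      refine Finset.sum_congr rfl fun i _ => ?_
      rw [smul_eq_mul, smul_mul_assoc]
    have hmg : (m : ℤ) • g ∈ J := by
      rw [hsum]
      refine Submodule.sum_mem _ fun i _ => ?_
      rw [show b i * f i = b i • f i from rfl]
      exact J.smul_mem _ (Submodule.subset_span ⟨i, rfl⟩)
    have hgKm : g ∈ K m := by
      rw [hK]
      obtain ⟨k, hk⟩ := Nat.dvd_factorial hmpos le_rfl
      have : (m.factorial : ℤ) • g = (k : ℤ) • ((m : ℤ) • g) := by
        rw [← mul_smul]; congr 1; push_cast [hk]; ring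
      rw [this]
      exact hzsmul _ _ hmg
    have hgKmax : g ∈ K (max N m) := hmono (le_max_right N m) hgKm
    have heq := hN (max N m) (le_max_left N m)
    have hgKN : g ∈ K N := by
      have : K N = K (max N m) := heq
      rw [this]
      exact hgKmax
    exact (hK N g).mp hgKN
  · -- backward direction
    intro hg
    have hJI : ∀ x : B, x ∈ J → (x : A) ∈ I := by
      intro x hx
      rw [hJdef] at hx
      induction hx using Submodule.span_induction with
      | mem y hy =>
          obtain ⟨i, rfl⟩ := hy
          exact Submodule.subset_span ⟨i, rfl⟩
      | zero => simp
      | add x y _ _ hx hy => push_cast; exact I.add_mem hx hy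
      | smul c x _ hx =>
          have h1 : ((c • x : B) : A) = (c : A) * (x : A) := rfl
          rw [h1, ← smul_eq_mul]
          exact I.smul_mem _ hx
    have h1 : ((N.factorial : ℤ) • (g : A)) ∈ I := by
      have h2 := hJI _ hg
      have h3 : (((N.factorial : ℤ) • g : B) : A) = (N.factorial : ℤ) • (g : A) := by
        push_cast; ring
      rwa [h3] at h2
    have h4 : (g : A) = ((N.factorial : ℚ))⁻¹ • ((N.factorial : ℤ) • (g : A)) := by
      rw [← Int.cast_smul_eq_zsmul ℚ, smul_smul]
      push_cast
      rw [inv_mul_cancel₀ (by exact_mod_cast N.factorial_ne_zero), one_smul]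
    rw [h4]
    exact Submodule.smul_of_tower_mem I _ h1
end

section
/- Let A be an associative unital ℚ-algebra (not necessarily commutative), and let B ⊆ A be a subring containing 1 such that every element of A is a rational multiple of an element of B (equivalently, the ℚ-span of B is all of A). Assume B is left Noetherian. Let f_1, …, f_r ∈ B, and let I ⊆ A be the left ideal of A generated by f_1, …, f_r. Then for all but finitely many primes p, the left ideal of the quotient ring B/pB generated by the image of I ∩ B under the canonical map B → B/pB coincides with the left ideal of B/pB generated by the images of f_1, …, f_r. -/
-- auxiliary: every element of A has a nonzero integer multiple in B
lemma exists_int_smul_mem_aux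
    (A : Type*) [Ring A] [Algebra ℚ A] (B : Subring A)
    (hspan : Submodule.span ℚ (B : Set A) = ⊤) (a : A) :
    ∃ n : ℤ, n ≠ 0 ∧ n • a ∈ B := by
  have ha : a ∈ Submodule.span ℚ (B : Set A) := hspan ▸ Submodule.mem_top
  induction ha using Submodule.span_induction with
  | mem x hx => exact ⟨1, one_ne_zero, by simpa using hx⟩
  | zero => exact ⟨1, one_ne_zero, by simpa using B.zero_mem⟩
  | add x y _ _ hx hy =>
      obtain ⟨n, hn, hnx⟩ := hx
      obtain ⟨m, hm, hmy⟩ := hy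
      refine ⟨n * m, mul_ne_zero hn hm, ?_⟩
      rw [smul_add]
      have h1 : (n * m) • x = m • (n • x) := by rw [mul_comm, mul_smul]
      have h2 : (n * m) • y = n • (m • y) := by rw [mul_smul]
      rw [h1, h2]
      exact add_mem (zsmul_mem hnx m) (zsmul_mem hmy n)
  | smul q x _ hx =>
      obtain ⟨n, hn, hnx⟩ := hx
      refine ⟨(q.den : ℤ) * n, mul_ne_zero (Int.natCast_ne_zero.mpr q.den_nz) hn, ?_⟩
      have hq : (q.den : ℚ) * q = q.num := by rw [mul_comm, Rat.mul_den_eq_num]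
      have : ((q.den : ℤ) * n) • (q • x) = q.num • (n • x) := by
        rw [← Int.cast_smul_eq_zsmul ℚ ((q.den : ℤ) * n) (q • x),
          ← Int.cast_smul_eq_zsmul ℚ q.num (n • x), ← Int.cast_smul_eq_zsmul ℚ n x,
          smul_smul, smul_smul]
        congr 1
        push_cast
        rw [mul_right_comm, hq]
      rw [this]
      exact zsmul_mem hnx q.num

/-- Let `A` be a unital (possibly noncommutative) `ℚ`-algebra and `B ⊆ A` a
subring whose `ℚ`-span is all of `A`, and which is left Noetherian. Given
`f_1, …, f_r ∈ B`, let `I` be the left ideal of `A` they generate. Then for all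
but finitely many primes `p`, the left ideal of `B/pB` generated by the image
of `I ∩ B` coincides with the left ideal of `B/pB` generated by the images of
`f_1, …, f_r`. -/
theorem reduction_mod_p_eq_for_almost_all_primes
    (A : Type*) [Ring A] [Algebra ℚ A] (B : Subring A)
    (hspan : Submodule.span ℚ (B : Set A) = ⊤)
    (hNoeth : IsNoetherianRing B)
    (r : ℕ) (f : Fin r → B) :
    {p : ℕ | p.Prime ∧
      Submodule.span ((TwoSidedIdeal.span {((p : ℕ) : B)}).ringCon.Quotient)
          (⇑(RingCon.mk' (TwoSidedIdeal.span {((p : ℕ) : B)}).ringCon) ''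
            {b : B | (b : A) ∈ Submodule.span A (Set.range fun i => (f i : A))}) ≠
        Submodule.span ((TwoSidedIdeal.span {((p : ℕ) : B)}).ringCon.Quotient)
          (Set.range fun i =>
            RingCon.mk' (TwoSidedIdeal.span {((p : ℕ) : B)}).ringCon (f i))}.Finite := by
  classical
  haveI : IsNoetherian B B := isNoetherianRing_iff.mp hNoeth
  set I : Submodule A A := Submodule.span A (Set.range fun i => (f i : A)) with hI
  -- the left ideal I ∩ B of B
  let J : Submodule B B :=
    { carrier := {b : B | (b : A) ∈ I}
      add_mem' := fun hx hy => by
        simp only [Set.mem_setOf_eq, Subring.coe_add] at *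
        exact I.add_mem hx hy
      zero_mem' := by
        simp only [Set.mem_setOf_eq, ZeroMemClass.coe_zero]
        exact I.zero_mem
      smul_mem' := fun c x hx => by
        simp only [Set.mem_setOf_eq, smul_eq_mul, Subring.coe_mul] at *
        have := I.smul_mem (c : A) hx
        rwa [smul_eq_mul] at this }
  have hJfg : J.FG := IsNoetherian.noetherian J
  obtain ⟨s, hs⟩ := hJfg
  set K : Submodule B B := Submodule.span B (Set.range f) with hK
  -- for each g in I ∩ B, a nonzero integer n such that any multiple of n
  -- times g lies in the left ideal of B generated by the f i
  have key : ∀ g : B, (g : A) ∈ I → ∃ n : ℤ, n ≠ 0 ∧ ∀ m : ℤ, n ∣ m → m • g ∈ K := by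
    intro g hg
    rw [hI, Submodule.mem_span_range_iff_exists_fun] at hg
    obtain ⟨c, hc⟩ := hg
    choose n hn hmem using fun i => exists_int_smul_mem_aux A B hspan (c i)
    refine ⟨∏ i, n i, Finset.prod_ne_zero_iff.mpr (fun i _ => hn i), ?_⟩
    intro m hm
    have hmc : ∀ i, m • c i ∈ B := by
      intro i
      obtain ⟨k, rfl⟩ := dvd_trans (Finset.dvd_prod_of_mem n (Finset.mem_univ i)) hm
      rw [mul_comm, mul_smul]
      exact zsmul_mem (hmem i) k
    have : ((m • g : B) : A) = ((∑ i, (⟨m • c i, hmc i⟩ : B) * f i : B) : A) := by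
      push_cast
      rw [← hc, Finset.smul_sum]
      congr 1
      ext i
      rw [smul_eq_mul, smul_mul_assoc]
    have heq : m • g = ∑ i, (⟨m • c i, hmc i⟩ : B) * f i := Subtype.coe_injective this
    rw [heq]
    exact Submodule.sum_mem _ fun i _ => by
      rw [← smul_eq_mul]
      exact Submodule.smul_mem _ _ (Submodule.subset_span ⟨i, rfl⟩)
  have hsJ : ∀ g ∈ s, (g : A) ∈ I := by
    intro g hg
    have : g ∈ J := hs ▸ Submodule.subset_span hg
    exact this
  choose! n hn hnmem using fun g (hg : g ∈ s) => key g (hsJ g hg)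
  set N : ℤ := ∏ g ∈ s, n g with hNdef
  have hN : N ≠ 0 := Finset.prod_ne_zero_iff.mpr (fun g hg => hn g hg)
  have hNJ : ∀ b ∈ J, N • b ∈ K := by
    intro b hb
    let L : B →ₗ[B] B :=
      { toFun := fun x => N • x
        map_add' := fun x y => smul_add N x y
        map_smul' := fun c x => (smul_comm N c x) }
    have : J ≤ K.comap L := by
      rw [← hs, Submodule.span_le]
      intro g hg
      exact hnmem g hg N (Finset.dvd_prod_of_mem n hg)
    exact this hb
  -- bad primes divide N
  apply Set.Finite.subset (Set.finite_Iic N.natAbs)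
  intro p hp
  obtain ⟨hp_prime, hp_ne⟩ := hp
  simp only [Set.mem_Iic]
  by_contra hple
  have hpd : ¬ p ∣ N.natAbs := fun h =>
    hple (Nat.le_of_dvd (Int.natAbs_pos.mpr hN) h)
  have hcop : IsCoprime (p : ℤ) N := by
    rw [Int.isCoprime_iff_gcd_eq_one]
    simpa [Int.gcd] using (Nat.Prime.coprime_iff_not_dvd hp_prime).mpr hpd
  obtain ⟨x, y, hxy⟩ := hcop
  apply hp_ne
  set c := (TwoSidedIdeal.span {((p : ℕ) : B)}).ringCon with hc
  set π := RingCon.mk' c with hπ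
  have hπp : π ((p : ℕ) : B) = 0 := by
    show (((p : ℕ) : B) : c.Quotient) = ((0 : B) : c.Quotient)
    exact (RingCon.eq c).mpr ((TwoSidedIdeal.mem_iff _ _).mp
      (TwoSidedIdeal.subset_span (Set.mem_singleton _)))
  have hmapspan : ∀ b ∈ K, π b ∈ Submodule.span c.Quotient (Set.range fun i => π (f i)) := by
    intro b hb
    induction hb using Submodule.span_induction with
    | mem z hz =>
        obtain ⟨i, rfl⟩ := hz
        exact Submodule.subset_span ⟨i, rfl⟩
    | zero => rw [map_zero]; exact Submodule.zero_mem _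
    | add u v _ _ hu hv => rw [map_add]; exact Submodule.add_mem _ hu hv
    | smul a u _ hu =>
        rw [smul_eq_mul, map_mul]
        exact Submodule.smul_mem _ (π a) hu
  apply le_antisymm
  · rw [Submodule.span_le]
    rintro _ ⟨b, hb, rfl⟩
    have hb' : (b : A) ∈ I := hb
    have hdecomp : b = (x * (p : ℤ)) • b + (y * N) • b := by
      rw [← add_smul, hxy, one_smul]
    have h1 : π ((x * (p : ℤ)) • b) = 0 := by
      have : (x * (p : ℤ)) • b = ((x : B) * ((p : ℕ) : B)) * b := by
        rw [zsmul_eq_mul]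
        push_cast
        ring
      rw [this, map_mul, map_mul, hπp, mul_zero, zero_mul]
    have h2 : (y * N) • b ∈ K := by
      rw [mul_smul, zsmul_eq_mul, ← smul_eq_mul]
      exact K.smul_mem _ (hNJ b hb')
    have hπb : π b = π ((y * N) • b) := by
      conv_lhs => rw [hdecomp]
      rw [map_add, h1, zero_add]
    exact hπb ▸ hmapspan _ h2
  · rw [Submodule.span_le]
    rintro _ ⟨i, rfl⟩
    exact Submodule.subset_span ⟨f i, Submodule.subset_span ⟨i, rfl⟩, rfl⟩
end

section
/- Let ≺ be a monomial ordering on ℕ^n, i.e. a linear order on n-tuples of natural numbers such that α ≺ β implies α + γ ≺ β + γ for all γ, and which is a well-ordering (equivalently, the zero tuple is the least element). Then for every finite subset F ⊆ ℕ^n there exists a weight vector ω ∈ ℕ^n with ω_i ≥ 1 for all i, such that for all α, β ∈ F, α ≺ β implies ⟨ω, α⟩ < ⟨ω, β⟩, where ⟨ω, α⟩ = ω_1 α_1 + ⋯ + ω_n α_n. -/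
section Aux

lemma exists_between_finsets (L U : Finset ℚ)
    (h : ∀ l ∈ L, ∀ u ∈ U, l < u) :
    ∃ t : ℚ, (∀ l ∈ L, l < t) ∧ (∀ u ∈ U, t < u) := by
  rcases L.eq_empty_or_nonempty with hL | hL
  · rcases U.eq_empty_or_nonempty with hU | hU
    · exact ⟨0, by simp [hL], by simp [hU]⟩
    · refine ⟨U.min' hU - 1, by simp [hL], fun u hu => ?_⟩
      have := U.min'_le u hu
      linarith
  · rcases U.eq_empty_or_nonempty with hU | hU
    · refine ⟨L.max' hL + 1, fun l hl => ?_, by simp [hU]⟩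
      have := L.le_max' l hl
      linarith
    · have hlt : L.max' hL < U.min' hU := h _ (L.max'_mem hL) _ (U.min'_mem hU)
      refine ⟨(L.max' hL + U.min' hU) / 2, fun l hl => ?_, fun u hu => ?_⟩
      · have := L.le_max' l hl; linarith
      · have := U.min'_le u hu; linarith

/-- Gordan's theorem over `ℚ`, proved by Fourier–Motzkin elimination. -/
theorem gordan (n : ℕ) : ∀ {ι : Type} [Fintype ι] (v : ι → Fin n → ℚ),
    (∀ c : ι → ℚ, (∀ j, 0 ≤ c j) → (∑ j, c j • v j) = 0 → ∀ j, c j = 0) →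
    ∃ ω : Fin n → ℚ, ∀ j, 0 < ∑ i, ω i * v j i := by
  induction n with
  | zero =>
    intro ι _ v H
    refine ⟨0, fun j => absurd (H (fun _ => 1) (fun _ => zero_le_one) ?_ j) one_ne_zero⟩
    funext i; exact i.elim0
  | succ m ih =>
    intro ι _ v H
    classical
    set lst := Fin.last m with hlst
    -- subtypes
    let PT := {j : ι // 0 < v j lst}
    let NT := {j : ι // v j lst < 0}
    let ZT := {j : ι // v j lst = 0}
    -- full-dimensional combined vectors
    let W : (PT × NT) ⊕ ZT → Fin (m + 1) → ℚ := fun x =>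
      match x with
      | Sum.inl (p, q) => (-(v q.1 lst)) • v p.1 + (v p.1 lst) • v q.1
      | Sum.inr z => v z.1
    have hWlast : ∀ x, W x lst = 0 := by
      rintro (⟨p, q⟩ | z)
      · simp only [W, Pi.add_apply, Pi.smul_apply, smul_eq_mul]; ring
      · exact z.2
    let w : (PT × NT) ⊕ ZT → Fin m → ℚ := fun x => Fin.init (W x)
    have H' : ∀ c : (PT × NT) ⊕ ZT → ℚ, (∀ x, 0 ≤ c x) →
        (∑ x, c x • w x) = 0 → ∀ x, c x = 0 := by
      intro c hc hsum
      -- full-dim sum is zero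
      have hWsum : (∑ x, c x • W x) = 0 := by
        funext i
        induction i using Fin.lastCases with
        | last =>
          have : (∑ x, c x • W x) lst = ∑ x, c x * W x lst := by
            simp [Finset.sum_apply]
          rw [this]
          simp [hWlast]
        | cast i =>
          have h1 : (∑ x, c x • W x) i.castSucc = (∑ x, c x • w x) i := by
            simp [Finset.sum_apply, w, Fin.init]
          rw [h1, hsum]; rfl
      -- lifted coefficients
      let c' : ι → ℚ := fun j =>
        if h0 : v j lst = 0 then c (Sum.inr ⟨j, h0⟩)
        else if hp : 0 < v j lst then
          ∑ q : NT, c (Sum.inl (⟨j, hp⟩, q)) * (-(v q.1 lst))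
        else
          ∑ p : PT, c (Sum.inl (p, ⟨j, lt_of_le_of_ne (not_lt.mp hp) h0⟩)) * (v p.1 lst)
      have hc' : ∀ j, 0 ≤ c' j := by
        intro j
        simp only [c']
        split
        · exact hc _
        · split
          · refine Finset.sum_nonneg fun q _ => mul_nonneg (hc _) ?_
            have := q.2; linarith
          · refine Finset.sum_nonneg fun p _ => mul_nonneg (hc _) ?_
            have := p.2; linarith
      have key : (∑ j, c' j • v j) = ∑ x, c x • W x := by
        rw [← Finset.sum_filter_add_sum_filter_not Finset.univ (fun j => v j lst = 0)
          (fun j => c' j • v j),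
          ← Finset.sum_filter_add_sum_filter_not
            (Finset.univ.filter (fun j => ¬ v j lst = 0)) (fun j => 0 < v j lst)
            (fun j => c' j • v j)]
        have e0 : ∑ j ∈ Finset.univ.filter (fun j => v j lst = 0), c' j • v j
            = ∑ z : ZT, c (Sum.inr z) • v z.1 := by
          rw [Finset.sum_subtype (p := fun j => v j lst = 0) _ (by simp) (fun j => c' j • v j)]
          refine Finset.sum_congr rfl fun z _ => ?_
          simp only [c', dif_pos z.2]
        have ep : ∑ j ∈ (Finset.univ.filter (fun j => ¬ v j lst = 0)).filter
              (fun j => 0 < v j lst), c' j • v j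
            = ∑ p : PT, ∑ q : NT, (c (Sum.inl (p, q)) * (-(v q.1 lst))) • v p.1 := by
          rw [Finset.sum_subtype (p := fun j => 0 < v j lst) _ (fun j => by
            simp only [Finset.mem_filter, Finset.mem_univ, true_and]
            constructor
            · rintro ⟨_, h⟩; exact h
            · intro h; exact ⟨ne_of_gt h, h⟩) (fun j => c' j • v j)]
          refine Finset.sum_congr rfl fun p _ => ?_
          have h0 : ¬ v p.1 lst = 0 := ne_of_gt p.2
          simp only [c', dif_neg h0, dif_pos p.2, Finset.sum_smul]
        have en : ∑ j ∈ (Finset.univ.filter (fun j => ¬ v j lst = 0)).filter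
              (fun j => ¬ 0 < v j lst), c' j • v j
            = ∑ q : NT, ∑ p : PT, (c (Sum.inl (p, q)) * (v p.1 lst)) • v q.1 := by
          rw [Finset.sum_subtype (p := fun j => v j lst < 0) _ (fun j => by
            simp only [Finset.mem_filter, Finset.mem_univ, true_and]
            constructor
            · rintro ⟨h1, h2⟩; exact lt_of_le_of_ne (not_lt.mp h2) h1
            · intro h; exact ⟨ne_of_lt h, not_lt.mpr (le_of_lt h)⟩) (fun j => c' j • v j)]
          refine Finset.sum_congr rfl fun q _ => ?_
          have h0 : ¬ v q.1 lst = 0 := ne_of_lt q.2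
          have hp : ¬ 0 < v q.1 lst := not_lt.mpr (le_of_lt q.2)
          simp only [c', dif_neg h0, dif_pos, dif_neg hp, Finset.sum_smul]
        rw [e0, ep, en, Fintype.sum_sum_type, Fintype.sum_prod_type]
        have : ∀ p : PT, ∀ q : NT, c (Sum.inl (p, q)) • W (Sum.inl (p, q))
            = (c (Sum.inl (p, q)) * (-(v q.1 lst))) • v p.1
              + (c (Sum.inl (p, q)) * (v p.1 lst)) • v q.1 := by
          intro p q
          simp only [W, smul_add, smul_smul]
        simp only [this, Finset.sum_add_distrib]
        rw [Finset.sum_comm (f := fun (p : PT) (q : NT) =>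
          (c (Sum.inl (p, q)) * (v p.1 lst)) • v q.1)]
        abel
      have hall : ∀ j, c' j = 0 := H c' hc' (key.trans hWsum)
      rintro (⟨p, q⟩ | z)
      · have h0 : ¬ v p.1 lst = 0 := ne_of_gt p.2
        have hz := hall p.1
        simp only [c', dif_neg h0, dif_pos p.2] at hz
        have hnn : ∀ q' : NT, q' ∈ Finset.univ →
            0 ≤ c (Sum.inl (⟨p.1, p.2⟩, q')) * (-(v q'.1 lst)) := by
          intro q' _
          refine mul_nonneg (hc _) ?_
          have := q'.2; linarith
        have hterm := (Finset.sum_eq_zero_iff_of_nonneg hnn).mp hz q (Finset.mem_univ q)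
        have hq : 0 < -(v q.1 lst) := by have := q.2; linarith
        have hcz : c (Sum.inl (⟨p.1, p.2⟩, q)) = 0 := by
          rcases mul_eq_zero.mp hterm with h | h
          · exact h
          · exact absurd h (ne_of_gt hq)
        simpa using hcz
      · have := hall z.1
        simpa only [c', dif_pos z.2] using this
    obtain ⟨ω', hω'⟩ := ih w H'
    -- weighted init degrees
    set d : ι → ℚ := fun j => ∑ i : Fin m, ω' i * v j i.castSucc with hd
    have hwinit : ∀ z : ZT, (0:ℚ) < d z.1 := fun z => hω' (Sum.inr z)
    have hpair : ∀ (p : PT) (q : NT),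
        0 < (-(v q.1 lst)) * d p.1 + (v p.1 lst) * d q.1 := by
      intro p q
      have := hω' (Sum.inl (p, q))
      have hexp : ∑ i : Fin m, ω' i * w (Sum.inl (p, q)) i
          = (-(v q.1 lst)) * d p.1 + (v p.1 lst) * d q.1 := by
        simp only [hd, Finset.mul_sum, ← Finset.sum_add_distrib]
        refine Finset.sum_congr rfl fun i _ => ?_
        simp only [w, W, Fin.init, Pi.add_apply, Pi.smul_apply, smul_eq_mul]
        ring
      rw [hexp] at this; exact this
    -- choose last weight t
    obtain ⟨t, htL, htU⟩ := exists_between_finsets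
      (Finset.univ.image (fun p : PT => (-(d p.1)) / v p.1 lst))
      (Finset.univ.image (fun q : NT => d q.1 / (-(v q.1 lst))))
      (by
        simp only [Finset.mem_image, Finset.mem_univ, true_and, forall_exists_index]
        rintro l p rfl u q rfl
        have hp : 0 < v p.1 lst := p.2
        have hq : 0 < -(v q.1 lst) := by have := q.2; linarith
        rw [div_lt_div_iff₀ hp hq]
        have := hpair p q
        nlinarith)
    refine ⟨(Fin.snoc ω' t : Fin (m+1) → ℚ), fun j => ?_⟩
    have hsplit : ∑ i, (Fin.snoc ω' t : Fin (m+1) → ℚ) i * v j i = d j + t * v j lst := by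
      rw [Fin.sum_univ_castSucc]
      simp [hd, hlst]
    rw [hsplit]
    rcases lt_trichotomy (v j lst) 0 with hneg | hzero | hpos
    · have hmem : d j / (-(v j lst)) ∈ Finset.univ.image
        (fun q : NT => d q.1 / (-(v q.1 lst))) := by
        exact Finset.mem_image.mpr ⟨⟨j, hneg⟩, Finset.mem_univ _, rfl⟩
      have := htU _ hmem
      have h2 : 0 < -(v j lst) := by linarith
      rw [lt_div_iff₀ h2] at this
      nlinarith
    · rw [hzero]
      simpa using hwinit ⟨j, hzero⟩
    · have hmem : (-(d j)) / v j lst ∈ Finset.univ.image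
        (fun p : PT => (-(d p.1)) / v p.1 lst) := by
        exact Finset.mem_image.mpr ⟨⟨j, hpos⟩, Finset.mem_univ _, rfl⟩
      have := htL _ hmem
      rw [div_lt_iff₀ hpos] at this
      nlinarith

variable {n : ℕ} {r : (Fin n → ℕ) → (Fin n → ℕ) → Prop}

/-- weak (reflexive) version of the order -/
def rle (r : (Fin n → ℕ) → (Fin n → ℕ) → Prop) (a b : Fin n → ℕ) : Prop := r a b ∨ a = b

lemma radd_radd (htrans : ∀ α β γ, r α β → r β γ → r α γ)
    (hadd : ∀ α β γ, r α β → r (α + γ) (β + γ))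
    {a b c d : Fin n → ℕ} (h1 : r a b) (h2 : r c d) : r (a + c) (b + d) := by
  have s1 : r (a + c) (b + c) := hadd _ _ _ h1
  have s2 : r (b + c) (b + d) := by
    have := hadd _ _ b h2
    rwa [add_comm c b, add_comm d b] at this
  exact htrans _ _ _ s1 s2

lemma radd_rle (htrans : ∀ α β γ, r α β → r β γ → r α γ)
    (hadd : ∀ α β γ, r α β → r (α + γ) (β + γ))
    {a b c d : Fin n → ℕ} (h1 : r a b) (h2 : rle r c d) : r (a + c) (b + d) := by
  rcases h2 with h2 | rfl
  · exact radd_radd htrans hadd h1 h2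
  · exact hadd _ _ _ h1

lemma rle_add (htrans : ∀ α β γ, r α β → r β γ → r α γ)
    (hadd : ∀ α β γ, r α β → r (α + γ) (β + γ))
    {a b c d : Fin n → ℕ} (h1 : rle r a b) (h2 : rle r c d) : rle r (a + c) (b + d) := by
  rcases h1 with h1 | rfl
  · exact Or.inl (radd_rle htrans hadd h1 h2)
  · rcases h2 with h2 | rfl
    · refine Or.inl ?_
      have := radd_rle htrans hadd h2 (Or.inr rfl : rle r a a)
      rwa [add_comm c a, add_comm d a] at this
    · exact Or.inr rfl

lemma rle_smul (htrans : ∀ α β γ, r α β → r β γ → r α γ)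
    (hadd : ∀ α β γ, r α β → r (α + γ) (β + γ))
    {a b : Fin n → ℕ} (h : rle r a b) (k : ℕ) : rle r (k • a) (k • b) := by
  induction k with
  | zero => simp [rle]
  | succ m ihm =>
    rw [succ_nsmul, succ_nsmul]
    exact rle_add htrans hadd ihm h

lemma r_smul (htrans : ∀ α β γ, r α β → r β γ → r α γ)
    (hadd : ∀ α β γ, r α β → r (α + γ) (β + γ))
    {a b : Fin n → ℕ} (h : r a b) {k : ℕ} (hk : k ≠ 0) : r (k • a) (k • b) := by
  obtain ⟨m, rfl⟩ := Nat.exists_eq_succ_of_ne_zero hk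
  rw [succ_nsmul, succ_nsmul, add_comm (m • a) a, add_comm (m • b) b]
  exact radd_rle htrans hadd h (rle_smul htrans hadd (Or.inl h) m)

lemma rle_sum (htrans : ∀ α β γ, r α β → r β γ → r α γ)
    (hadd : ∀ α β γ, r α β → r (α + γ) (β + γ))
    {ι : Type} (t : Finset ι) (f g : ι → (Fin n → ℕ))
    (h : ∀ j ∈ t, rle r (f j) (g j)) : rle r (∑ j ∈ t, f j) (∑ j ∈ t, g j) := by
  classical
  induction t using Finset.induction with
  | empty => simp [rle]
  | @insert x s hx ih =>
    rw [Finset.sum_insert hx, Finset.sum_insert hx]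
    exact rle_add htrans hadd (h x (Finset.mem_insert_self x s))
      (ih fun j hj => h j (Finset.mem_insert_of_mem hj))

lemma r_sum (htrans : ∀ α β γ, r α β → r β γ → r α γ)
    (hadd : ∀ α β γ, r α β → r (α + γ) (β + γ))
    {ι : Type} (t : Finset ι) (f g : ι → (Fin n → ℕ))
    (h : ∀ j ∈ t, rle r (f j) (g j)) {j₀ : ι} (hj₀ : j₀ ∈ t)
    (hs : r (f j₀) (g j₀)) : r (∑ j ∈ t, f j) (∑ j ∈ t, g j) := by
  classical
  rw [← Finset.add_sum_erase _ f hj₀, ← Finset.add_sum_erase _ g hj₀]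
  exact radd_rle htrans hadd hs
    (rle_sum htrans hadd _ f g fun j hj => h j (Finset.mem_of_mem_erase hj))

lemma r_zero_lt (htri : ∀ α β, r α β ∨ α = β ∨ r β α)
    (hadd : ∀ α β γ, r α β → r (α + γ) (β + γ))
    (hwf : WellFounded r)
    (γ : Fin n → ℕ) (hγ : γ ≠ 0) : r 0 γ := by
  have hno : ¬ r γ 0 := by
    intro h
    set f : ℕ → (Fin n → ℕ) := fun k => (k + 1) • γ with hf
    have hdesc : ∀ k, r (f (k + 1)) (f k) := by
      intro k
      have := hadd _ _ ((k + 1) • γ) h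
      rw [zero_add] at this
      have he : f (k + 1) = γ + (k + 1) • γ := by
        rw [hf]; simp only []
        rw [succ_nsmul, add_comm]
      rw [he]
      exact this
    have hne : (Set.range f).Nonempty := ⟨f 0, ⟨0, rfl⟩⟩
    obtain ⟨k, hk⟩ := hwf.min_mem (Set.range f) hne
    exact hwf.not_lt_min (Set.range f) ⟨k + 1, rfl⟩ (hk ▸ hdesc k)
  rcases htri 0 γ with h | h | h
  · exact h
  · exact absurd h.symm hγ
  · exact absurd h hno

lemma exists_nat_mul (q : ℚ) (hq : 0 ≤ q) (M : ℕ) (h : q.den ∣ M) :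
    ∃ k : ℕ, (k : ℚ) = M * q := by
  obtain ⟨t, ht⟩ := h
  refine ⟨t * q.num.toNat, ?_⟩
  have hnum : (0:ℤ) ≤ q.num := Rat.num_nonneg.mpr hq
  have h1 : ((q.num.toNat : ℕ) : ℚ) = (q.num : ℚ) := by
    exact_mod_cast congrArg (Int.cast : ℤ → ℚ) (Int.toNat_of_nonneg hnum)
  push_cast
  rw [h1, ht]
  push_cast
  rw [← Rat.mul_den_eq_num]
  ring

end Aux

/-- Let `≺` be a monomial ordering on `ℕ^n`: a (strict) linear order compatible
with addition which is well-founded (a well-ordering). Then for every finite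
set `F ⊆ ℕ^n` there is a weight vector `ω` with all entries `≥ 1` such that
`≺` is represented on `F` by comparison of `ω`-weighted degrees. -/
theorem exists_weight_vector_representing_monomial_order_on_finset
    (n : ℕ) (r : (Fin n → ℕ) → (Fin n → ℕ) → Prop)
    (htri : ∀ α β, r α β ∨ α = β ∨ r β α)
    (hirr : ∀ α, ¬ r α α)
    (htrans : ∀ α β γ, r α β → r β γ → r α γ)
    (hadd : ∀ α β γ, r α β → r (α + γ) (β + γ))
    (hwf : WellFounded r)
    (F : Finset (Fin n → ℕ)) :
    ∃ ω : Fin n → ℕ, (∀ i, 1 ≤ ω i) ∧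
      ∀ α ∈ F, ∀ β ∈ F, r α β → (∑ i, ω i * α i) < ∑ i, ω i * β i := by
  classical
  rcases Nat.eq_zero_or_pos n with hn | hn
  · subst hn
    refine ⟨fun _ => 1, fun i => le_refl 1, fun α hα β hβ hrab => ?_⟩
    have hab : α = β := funext fun i => i.elim0
    subst hab
    exact absurd hrab (hirr α)
  · set i0 : Fin n := ⟨0, hn⟩ with hi0
    set a : (↥F × ↥F) ⊕ Fin n → (Fin n → ℕ) :=
      Sum.elim (fun p => if r p.1.1 p.2.1 then (p.1.1 : Fin n → ℕ) else 0)
        (fun _ => 0) with ha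
    set b : (↥F × ↥F) ⊕ Fin n → (Fin n → ℕ) :=
      Sum.elim (fun p => if r p.1.1 p.2.1 then (p.2.1 : Fin n → ℕ) else Pi.single i0 1)
        (fun i => Pi.single i 1) with hb
    set v : (↥F × ↥F) ⊕ Fin n → Fin n → ℚ :=
      fun x i => (b x i : ℚ) - (a x i : ℚ) with hv
    have hsingle : ∀ i : Fin n, (Pi.single i 1 : Fin n → ℕ) ≠ 0 := by
      intro i h
      have := congrFun h i
      simp [Pi.single_eq_same] at this
    have hstrict : ∀ x, r (a x) (b x) := by
      rintro (⟨p, q⟩ | i)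
      · by_cases hpq : r p.1 q.1
        · simpa [ha, hb, if_pos hpq] using hpq
        · simp only [ha, hb, Sum.elim_inl, if_neg hpq]
          exact r_zero_lt htri hadd hwf _ (hsingle i0)
      · simp only [ha, hb, Sum.elim_inr]
        exact r_zero_lt htri hadd hwf _ (hsingle i)
    have H : ∀ c : (↥F × ↥F) ⊕ Fin n → ℚ, (∀ j, 0 ≤ c j) →
        (∑ j, c j • v j) = 0 → ∀ j, c j = 0 := by
      intro c hc hsum
      by_contra hcon
      push_neg at hcon
      obtain ⟨j₀, hj₀⟩ := hcon
      set M : ℕ := ∏ j, (c j).den with hM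
      have hMd : ∀ j, (c j).den ∣ M := fun j => Finset.dvd_prod_of_mem _ (Finset.mem_univ j)
      choose k hk using fun j => exists_nat_mul (c j) (hc j) M (hMd j)
      have hMpos : (0:ℚ) < M := by
        have : 0 < M := Finset.prod_pos fun j _ => (c j).pos
        exact_mod_cast this
      have hk0 : k j₀ ≠ 0 := by
        intro h
        have h2 : (M:ℚ) * c j₀ = 0 := by rw [← hk j₀, h]; simp
        rcases mul_eq_zero.mp h2 with h3 | h3
        · exact absurd h3 (ne_of_gt hMpos)
        · exact hj₀ h3
      have hsum2 : ∑ j, ((k j : ℚ)) • v j = 0 := by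
        have : ∀ j, ((k j : ℚ)) • v j = (M:ℚ) • (c j • v j) := by
          intro j
          rw [hk j, smul_smul]
        rw [Finset.sum_congr rfl fun j _ => this j, ← Finset.smul_sum, hsum, smul_zero]
      have hAB : (∑ j, k j • a j) = ∑ j, k j • b j := by
        funext i
        have h1 := congrFun hsum2 i
        simp only [Finset.sum_apply, Pi.smul_apply, Pi.zero_apply, smul_eq_mul, hv,
          mul_sub] at h1
        rw [Finset.sum_sub_distrib, sub_eq_zero] at h1
        have h2 : ((∑ j, k j • a j) i : ℚ) = ((∑ j, k j • b j) i : ℚ) := by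
          simp only [Finset.sum_apply, Pi.smul_apply, smul_eq_mul]
          push_cast
          exact h1.symm
        exact_mod_cast h2
      have hstr := r_sum htrans hadd Finset.univ (fun j => k j • a j) (fun j => k j • b j)
        (fun j _ => rle_smul htrans hadd (Or.inl (hstrict j)) (k j))
        (Finset.mem_univ j₀) (r_smul htrans hadd (hstrict j₀) hk0)
      rw [hAB] at hstr
      exact hirr _ hstr
    obtain ⟨ωq, hωq⟩ := gordan n v H
    have hωqpos : ∀ i, 0 < ωq i := by
      intro i
      have h1 := hωq (Sum.inr i)
      have h2 : ∑ i', ωq i' * v (Sum.inr i) i' = ωq i := by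
        rw [Finset.sum_eq_single i]
        · simp [hv, ha, hb, Pi.single_eq_same]
        · intro i' _ hne
          simp [hv, ha, hb, Pi.single_eq_of_ne hne]
        · intro h; exact absurd (Finset.mem_univ i) h
      rwa [h2] at h1
    set N : ℕ := ∏ i, (ωq i).den with hN
    have hNd : ∀ i, (ωq i).den ∣ N := fun i => Finset.dvd_prod_of_mem _ (Finset.mem_univ i)
    choose ω hω using fun i => exists_nat_mul (ωq i) (le_of_lt (hωqpos i)) N (hNd i)
    have hNpos : (0:ℚ) < N := by
      have : 0 < N := Finset.prod_pos fun i _ => (ωq i).pos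
      exact_mod_cast this
    refine ⟨ω, fun i => ?_, fun α hα β hβ hrab => ?_⟩
    · rw [Nat.one_le_iff_ne_zero]
      intro h
      have h2 : (ω i : ℚ) = 0 := by rw [h]; simp
      rw [hω i] at h2
      have := mul_pos hNpos (hωqpos i)
      linarith
    · have key := hωq (Sum.inl (⟨⟨α, hα⟩, ⟨β, hβ⟩⟩))
      have hveq : ∀ i, v (Sum.inl (⟨⟨α, hα⟩, ⟨β, hβ⟩⟩)) i = (β i : ℚ) - α i := by
        intro i
        simp [hv, ha, hb, if_pos hrab]
      have hpos : (0:ℚ) < ∑ i, ωq i * ((β i : ℚ) - α i) := by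
        have hcg : ∑ i, ωq i * v (Sum.inl (⟨⟨α, hα⟩, ⟨β, hβ⟩⟩)) i
            = ∑ i, ωq i * ((β i : ℚ) - α i) :=
          Finset.sum_congr rfl fun i _ => by rw [hveq i]
        rw [hcg] at key
        exact key
      have hdiff : ∑ i, (ω i : ℚ) * β i - ∑ i, (ω i : ℚ) * α i
          = (N : ℚ) * ∑ i, ωq i * ((β i : ℚ) - α i) := by
        rw [← Finset.sum_sub_distrib, Finset.mul_sum]
        refine Finset.sum_congr rfl fun i _ => ?_
        rw [← mul_sub, hω i]
        ring
      have hlt : ((∑ i, ω i * α i : ℕ) : ℚ) < ((∑ i, ω i * β i : ℕ) : ℚ) := by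
        push_cast
        nlinarith [mul_pos hNpos hpos]
      exact_mod_cast hlt
end
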